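/- arXiv:2409.07502 — 3 statements merged into one kernel-verified Lean document; each statement's English description precedes it below -/
import Mathlib

section
/- For any smooth symmetric 2-tensor h on Hⁿ, setting h̃ = h - (trace_b h) b, one has DⁱDʲh̃_{ij} = (x¹)^{n+1} ∂_i∂_j((x¹)^{-(n+1)} h̃^{ij}) + (x¹)ⁿ ∂₁((x¹)^{-(n+1)} δ_{ij} h̃^{ij}), where D is the Levi-Civita connection of the hyperbolic metric, indices are raised with b^{ij} = (x¹)² δ^{ij}, and ∂_i denotes coordinate partial derivatives. -/
open MeasureTheory
open scoped BigOperators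

/-- Partial derivative in the `i`-th coordinate direction. -/
noncomputable def pd {n : ℕ} (i : Fin n) (f : (Fin n → ℝ) → ℝ) (x : Fin n → ℝ) : ℝ :=
  fderiv ℝ f x (Pi.single i 1)

/-- The hyperbolic metric `b_{ij} = (x¹)⁻² δ_{ij}` on the upper half-space. -/
noncomputable def bmet {n : ℕ} [NeZero n] (x : Fin n → ℝ) (i j : Fin n) : ℝ :=
  ((x 0) ^ 2)⁻¹ * (if i = j then 1 else 0)

/-- The inverse hyperbolic metric `b^{ij} = (x¹)² δ^{ij}`. -/
noncomputable def binv {n : ℕ} [NeZero n] (x : Fin n → ℝ) (i j : Fin n) : ℝ :=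
  (x 0) ^ 2 * (if i = j then 1 else 0)

/-- Christoffel symbols `Γᵏᵢⱼ = ½ bᵏˡ(∂ᵢ b_{jl} + ∂ⱼ b_{il} - ∂_l b_{ij})` of `bmet`. -/
noncomputable def chris {n : ℕ} [NeZero n] (k i j : Fin n) (x : Fin n → ℝ) : ℝ :=
  (1/2) * ∑ l, binv x k l *
    (pd i (fun y => bmet y j l) x + pd j (fun y => bmet y i l) x - pd l (fun y => bmet y i j) x)

/-- Covariant derivative `(D_k h)_{ij}` of a symmetric 2-tensor `h`. -/
noncomputable def covD {n : ℕ} [NeZero n] (h : (Fin n → ℝ) → Fin n → Fin n → ℝ)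
    (k i j : Fin n) (x : Fin n → ℝ) : ℝ :=
  pd k (fun y => h y i j) x - (∑ l, chris l k i x * h x l j) - (∑ l, chris l k j x * h x i l)

/-- Second covariant derivative `(D_m D_k h)_{ij}` of a symmetric 2-tensor `h`. -/
noncomputable def covDD {n : ℕ} [NeZero n] (h : (Fin n → ℝ) → Fin n → Fin n → ℝ)
    (m k i j : Fin n) (x : Fin n → ℝ) : ℝ :=
  pd m (fun y => covD h k i j y) x - (∑ l, chris l m k x * covD h l i j x)
    - (∑ l, chris l m i x * covD h k l j x) - (∑ l, chris l m j x * covD h k i l x)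

/-- The trace `b^{ij} h_{ij}` of a 2-tensor with respect to the hyperbolic metric. -/
noncomputable def trB {n : ℕ} [NeZero n] (h : (Fin n → ℝ) → Fin n → Fin n → ℝ)
    (x : Fin n → ℝ) : ℝ :=
  ∑ i, ∑ j, binv x i j * h x i j

/-- The linearized scalar curvature operator
`P(h) = DⁱDʲh_{ij} - DⁱD_i hʲⱼ - Ric^{ij} h_{ij}` at the hyperbolic metric,
where `Ric = (1-n) b`. -/
noncomputable def Pop {n : ℕ} [NeZero n] (h : (Fin n → ℝ) → Fin n → Fin n → ℝ)
    (x : Fin n → ℝ) : ℝ :=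
  (∑ a, ∑ c, ∑ i, ∑ j, binv x i a * binv x j c * covDD h a c i j x)
    - (∑ a, ∑ c, binv x a c *
        (pd a (fun y => pd c (fun z => trB h z) y) x
          - ∑ l, chris l a c x * pd l (fun z => trB h z) x))
    - (1 - (n : ℝ)) * trB h x

/-- Raised components `h^{ij} = b^{ik} b^{jl} h_{kl}`. -/
noncomputable def raise {n : ℕ} [NeZero n] (h : (Fin n → ℝ) → Fin n → Fin n → ℝ)
    (x : Fin n → ℝ) (i j : Fin n) : ℝ :=
  ∑ k, ∑ l, binv x i k * binv x j l * h x k l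

section AuxDoubleDiv

set_option linter.unusedSectionVars false
variable {n : ℕ} [NeZero n]

def U (n : ℕ) [NeZero n] : Set (Fin n → ℝ) := {y | 0 < y 0}

lemma U_open : IsOpen (U n) := isOpen_lt continuous_const (continuous_apply 0)

lemma pd_congr {f g : (Fin n → ℝ) → ℝ} {x : Fin n → ℝ} (hx : x ∈ U n)
    (hfg : ∀ y ∈ U n, f y = g y) (i : Fin n) : pd i f x = pd i g x := by
  unfold pd
  rw [Filter.EventuallyEq.fderiv_eq (Filter.eventually_of_mem (U_open.mem_nhds hx) hfg)]

lemma pd_add {f g : (Fin n → ℝ) → ℝ} {x : Fin n → ℝ} (hf : DifferentiableAt ℝ f x)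
    (hg : DifferentiableAt ℝ g x) (i : Fin n) :
    pd i (fun y => f y + g y) x = pd i f x + pd i g x := by
  unfold pd; rw [fderiv_fun_add hf hg]; rfl

lemma pd_sub {f g : (Fin n → ℝ) → ℝ} {x : Fin n → ℝ} (hf : DifferentiableAt ℝ f x)
    (hg : DifferentiableAt ℝ g x) (i : Fin n) :
    pd i (fun y => f y - g y) x = pd i f x - pd i g x := by
  unfold pd; rw [fderiv_fun_sub hf hg]; rfl

lemma pd_mul {f g : (Fin n → ℝ) → ℝ} {x : Fin n → ℝ} (hf : DifferentiableAt ℝ f x)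
    (hg : DifferentiableAt ℝ g x) (i : Fin n) :
    pd i (fun y => f y * g y) x = f x * pd i g x + g x * pd i f x := by
  unfold pd; rw [fderiv_fun_mul hf hg]; simp

lemma pd_const {x : Fin n → ℝ} (c : ℝ) (i : Fin n) : pd i (fun _ => c) x = 0 := by
  unfold pd; rw [fderiv_fun_const]; simp

lemma pd_const_mul {f : (Fin n → ℝ) → ℝ} {x : Fin n → ℝ} (hf : DifferentiableAt ℝ f x)
    (c : ℝ) (i : Fin n) : pd i (fun y => c * f y) x = c * pd i f x := by
  unfold pd; rw [fderiv_const_mul hf]; simp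

lemma pd_sum {ι : Type*} {s : Finset ι} {f : ι → (Fin n → ℝ) → ℝ} {x : Fin n → ℝ}
    (hf : ∀ b ∈ s, DifferentiableAt ℝ (f b) x) (i : Fin n) :
    pd i (fun y => ∑ b ∈ s, f b y) x = ∑ b ∈ s, pd i (f b) x := by
  unfold pd; rw [fderiv_fun_sum hf]; simp

lemma diff_comp0 {g : ℝ → ℝ} {x : Fin n → ℝ} (hg : DifferentiableAt ℝ g (x 0)) :
    DifferentiableAt ℝ (fun y : Fin n → ℝ => g (y 0)) x :=
  hg.comp x ((ContinuousLinearMap.proj (R := ℝ) (φ := fun _ : Fin n => ℝ) 0).differentiableAt)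

lemma pd_comp0 {g : ℝ → ℝ} {x : Fin n → ℝ} (hg : DifferentiableAt ℝ g (x 0)) (i : Fin n) :
    pd i (fun y => g (y 0)) x = (if i = 0 then deriv g (x 0) else 0) := by
  unfold pd
  have h := (hg.hasDerivAt.comp_hasFDerivAt x
    (ContinuousLinearMap.proj (R := ℝ) (φ := fun _ : Fin n => ℝ) 0).hasFDerivAt)
  have h2 : HasFDerivAt (fun y : Fin n → ℝ => g (y 0))
      (deriv g (x 0) • ContinuousLinearMap.proj (R := ℝ) (φ := fun _ : Fin n => ℝ) 0) x := h
  rw [h2.fderiv]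
  rcases eq_or_ne i 0 with h0 | h0
  · simp [h0, Pi.single_apply]
  · simp [h0, Pi.single_apply, Ne.symm h0]

lemma contDiffOn_pd {f : (Fin n → ℝ) → ℝ} (hf : ContDiffOn ℝ (⊤ : ℕ∞) f (U n)) (j : Fin n) :
    ContDiffOn ℝ (⊤ : ℕ∞) (fun y => pd j f y) (U n) := by
  have h1 : ContDiffOn ℝ (⊤ : ℕ∞) (fderiv ℝ f) (U n) := by
    apply hf.fderiv_of_isOpen U_open
    exact (by simp)
  exact h1.clm_apply contDiffOn_const

lemma diffAt_of_contDiffOn {f : (Fin n → ℝ) → ℝ} (hf : ContDiffOn ℝ (⊤ : ℕ∞) f (U n))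
    {x : Fin n → ℝ} (hx : x ∈ U n) : DifferentiableAt ℝ f x :=
  (hf.contDiffAt (U_open.mem_nhds hx)).differentiableAt (by simp)


/-- Kronecker delta as a real number. -/
def dl {n : ℕ} (i j : Fin n) : ℝ := if i = j then 1 else 0

lemma dl_self {n : ℕ} (i : Fin n) : dl i i = 1 := by simp [dl]

lemma dl_comm {n : ℕ} (i j : Fin n) : dl i j = dl j i := by
  simp only [dl]; by_cases h : i = j
  · simp [h]
  · simp [h, Ne.symm h]

lemma dl_sum {n : ℕ} (a : Fin n) (M : Fin n → ℝ) : (∑ l, dl a l * M l) = M a := by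
  simp [dl, ite_mul, Finset.sum_ite_eq]

lemma dl_sum' {n : ℕ} (a : Fin n) (M : Fin n → ℝ) : (∑ l, dl l a * M l) = M a := by
  simp [dl, ite_mul, Finset.sum_ite_eq']

lemma pd_bmet {n : ℕ} [NeZero n] {x : Fin n → ℝ} (hx : x ∈ U n) (i j l : Fin n) :
    pd i (fun y => bmet y j l) x = dl i 0 * (-2 * ((x 0) ^ 3)⁻¹) * dl j l := by
  have hx0 : x 0 ≠ 0 := ne_of_gt hx
  have hd : HasDerivAt (fun t : ℝ => (t ^ 2)⁻¹ * dl j l)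
      ((-(2 * x 0 ^ 1) / (x 0 ^ 2) ^ 2) * dl j l) (x 0) :=
    (((hasDerivAt_pow 2 (x 0)).inv (pow_ne_zero 2 hx0))).mul_const _
  have : pd i (fun y => bmet y j l) x
      = pd i (fun y => (fun t : ℝ => (t ^ 2)⁻¹ * dl j l) (y 0)) x := rfl
  rw [this, pd_comp0 hd.differentiableAt, hd.deriv]
  rcases eq_or_ne i 0 with h0 | h0
  · simp only [h0, if_true, dl_self, one_mul]
    field_simp
  · simp [h0, dl, Ne.symm h0]

lemma binv_eq {n : ℕ} [NeZero n] (x : Fin n → ℝ) (i j : Fin n) :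
    binv x i j = (x 0) ^ 2 * dl i j := rfl

lemma chris_eq {n : ℕ} [NeZero n] {x : Fin n → ℝ} (hx : x ∈ U n) (a b c : Fin n) :
    chris a b c x = -(x 0)⁻¹ * (dl b 0 * dl c a + dl c 0 * dl b a - dl a 0 * dl b c) := by
  have hx0 : x 0 ≠ 0 := ne_of_gt hx
  unfold chris
  have : ∀ l : Fin n,
      binv x a l * (pd b (fun y => bmet y c l) x + pd c (fun y => bmet y b l) x
        - pd l (fun y => bmet y b c) x)
      = dl a l * ((x 0) ^ 2 * (dl b 0 * (-2 * ((x 0) ^ 3)⁻¹) * dl c l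
          + dl c 0 * (-2 * ((x 0) ^ 3)⁻¹) * dl b l
          - dl l 0 * (-2 * ((x 0) ^ 3)⁻¹) * dl b c)) := by
    intro l
    rw [binv_eq, pd_bmet hx, pd_bmet hx, pd_bmet hx]
    ring
  rw [Finset.sum_congr rfl (fun l _ => this l), dl_sum a]
  rw [show ((x 0) ^ 3)⁻¹ = (x 0)⁻¹ * ((x 0) ^ 2)⁻¹ by rw [← mul_inv]; congr 1; ring]
  field_simp
  ring

lemma chris_sum {n : ℕ} [NeZero n] {x : Fin n → ℝ} (hx : x ∈ U n) (b c : Fin n)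
    (M : Fin n → ℝ) :
    (∑ l, chris l b c x * M l)
      = -(x 0)⁻¹ * (dl b 0 * M c + dl c 0 * M b - dl b c * M 0) := by
  have : ∀ l : Fin n, chris l b c x * M l
      = dl c l * (-(x 0)⁻¹ * dl b 0 * M l) + dl b l * (-(x 0)⁻¹ * dl c 0 * M l)
        + dl l 0 * ((x 0)⁻¹ * dl b c * M l) := by
    intro l
    rw [chris_eq hx]
    ring
  rw [Finset.sum_congr rfl (fun l _ => this l)]
  rw [Finset.sum_add_distrib, Finset.sum_add_distrib, dl_sum c, dl_sum b, dl_sum' 0]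
  ring

section Main

variable {n : ℕ} [NeZero n] {k : (Fin n → ℝ) → Fin n → Fin n → ℝ}

lemma kdiff (hsmooth : ∀ i j, ContDiffOn ℝ (⊤ : ℕ∞) (fun x => k x i j) (U n))
    {x : Fin n → ℝ} (hx : x ∈ U n) (i j : Fin n) :
    DifferentiableAt ℝ (fun y => k y i j) x :=
  diffAt_of_contDiffOn (hsmooth i j) hx

lemma A1diff (hsmooth : ∀ i j, ContDiffOn ℝ (⊤ : ℕ∞) (fun x => k x i j) (U n))
    {x : Fin n → ℝ} (hx : x ∈ U n) (c i j : Fin n) :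
    DifferentiableAt ℝ (fun y => pd c (fun z => k z i j) y) x :=
  diffAt_of_contDiffOn (contDiffOn_pd (hsmooth i j) c) hx

lemma inv0diff {x : Fin n → ℝ} (hx : x ∈ U n) :
    DifferentiableAt ℝ (fun y : Fin n → ℝ => (y 0)⁻¹) x :=
  diff_comp0 ((hasDerivAt_inv (ne_of_gt hx)).differentiableAt)

lemma ite_to_dl {n : ℕ} (a b : Fin n) (r : ℝ) : (if a = b then r else 0) = dl a b * r := by
  unfold dl; split <;> simp

lemma pd_inv0 {x : Fin n → ℝ} (hx : x ∈ U n) (a : Fin n) :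
    pd a (fun y : Fin n → ℝ => (y 0)⁻¹) x = dl a 0 * (-((x 0) ^ 2)⁻¹) := by
  rw [show (fun y : Fin n → ℝ => (y 0)⁻¹) = (fun y => (fun t : ℝ => t⁻¹) (y 0)) from rfl,
    pd_comp0 (hasDerivAt_inv (ne_of_gt hx)).differentiableAt,
    (hasDerivAt_inv (ne_of_gt hx)).deriv, ite_to_dl]

lemma covD_eq (hsym : ∀ x i j, k x i j = k x j i)
    {x : Fin n → ℝ} (hx : x ∈ U n) (c i j : Fin n) :
    covD k c i j x = pd c (fun y => k y i j) x
      + (x 0)⁻¹ * (2 * dl c 0 * k x i j + dl i 0 * k x c j + dl j 0 * k x c i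
          - dl c i * k x 0 j - dl c j * k x 0 i) := by
  unfold covD
  rw [chris_sum hx c i (fun l => k x l j), chris_sum hx c j (fun l => k x i l)]
  rw [hsym x i c, hsym x i 0]
  ring


lemma pd_covD (hsym : ∀ x i j, k x i j = k x j i)
    (hsmooth : ∀ i j, ContDiffOn ℝ (⊤ : ℕ∞) (fun x => k x i j) (U n))
    {x : Fin n → ℝ} (hx : x ∈ U n) (a c i j : Fin n) :
    pd a (fun y => covD k c i j y) x
      = pd a (fun y => pd c (fun z => k z i j) y) x
        + (x 0)⁻¹ * (2 * dl c 0 * pd a (fun y => k y i j) x + dl i 0 * pd a (fun y => k y c j) x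
            + dl j 0 * pd a (fun y => k y c i) x - dl c i * pd a (fun y => k y 0 j) x
            - dl c j * pd a (fun y => k y 0 i) x)
        + dl a 0 * (-((x 0) ^ 2)⁻¹) * (2 * dl c 0 * k x i j + dl i 0 * k x c j
            + dl j 0 * k x c i - dl c i * k x 0 j - dl c j * k x 0 i) := by
  have d1 : DifferentiableAt ℝ (fun y => 2 * dl c 0 * k y i j + dl i 0 * k y c j
      + dl j 0 * k y c i - dl c i * k y 0 j - dl c j * k y 0 i) x := by
    exact ((((((kdiff hsmooth hx i j).const_mul _).add
      ((kdiff hsmooth hx c j).const_mul _)).add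
      ((kdiff hsmooth hx c i).const_mul _)).sub
      ((kdiff hsmooth hx 0 j).const_mul _)).sub
      ((kdiff hsmooth hx 0 i).const_mul _))
  have hFpd : pd a (fun y => 2 * dl c 0 * k y i j + dl i 0 * k y c j
      + dl j 0 * k y c i - dl c i * k y 0 j - dl c j * k y 0 i) x
      = 2 * dl c 0 * pd a (fun y => k y i j) x + dl i 0 * pd a (fun y => k y c j) x
        + dl j 0 * pd a (fun y => k y c i) x - dl c i * pd a (fun y => k y 0 j) x
        - dl c j * pd a (fun y => k y 0 i) x := by
    rw [pd_sub (((((kdiff hsmooth hx i j).const_mul _).fun_add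
        ((kdiff hsmooth hx c j).const_mul _)).fun_add
        ((kdiff hsmooth hx c i).const_mul _)).fun_sub
        ((kdiff hsmooth hx 0 j).const_mul _)) ((kdiff hsmooth hx 0 i).const_mul _),
      pd_sub ((((kdiff hsmooth hx i j).const_mul _).fun_add
        ((kdiff hsmooth hx c j).const_mul _)).fun_add
        ((kdiff hsmooth hx c i).const_mul _)) ((kdiff hsmooth hx 0 j).const_mul _),
      pd_add (((kdiff hsmooth hx i j).const_mul _).fun_add
        ((kdiff hsmooth hx c j).const_mul _)) ((kdiff hsmooth hx c i).const_mul _),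
      pd_add ((kdiff hsmooth hx i j).const_mul _) ((kdiff hsmooth hx c j).const_mul _),
      pd_const_mul (kdiff hsmooth hx i j), pd_const_mul (kdiff hsmooth hx c j),
      pd_const_mul (kdiff hsmooth hx c i), pd_const_mul (kdiff hsmooth hx 0 j),
      pd_const_mul (kdiff hsmooth hx 0 i)]
  have step1 : pd a (fun y => covD k c i j y) x
      = pd a (fun y => pd c (fun z => k z i j) y
          + (y 0)⁻¹ * (2 * dl c 0 * k y i j + dl i 0 * k y c j + dl j 0 * k y c i
              - dl c i * k y 0 j - dl c j * k y 0 i)) x :=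
    pd_congr hx (fun y hy => covD_eq hsym hy c i j) a
  rw [step1, pd_add (A1diff hsmooth hx c i j) ((inv0diff hx).fun_mul d1),
    pd_mul (inv0diff hx) d1, pd_inv0 hx, hFpd]
  ring


lemma covDD_eq (hsym : ∀ x i j, k x i j = k x j i)
    (hsmooth : ∀ i j, ContDiffOn ℝ (⊤ : ℕ∞) (fun x => k x i j) (U n))
    {x : Fin n → ℝ} (hx : x ∈ U n) (a c i j : Fin n) :
    covDD k a c i j x
      = pd a (fun y => pd c (fun z => k z i j) y) x
        + (x 0)⁻¹ * (2 * dl c 0 * pd a (fun y => k y i j) x + dl i 0 * pd a (fun y => k y c j) x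
            + dl j 0 * pd a (fun y => k y c i) x - dl c i * pd a (fun y => k y 0 j) x
            - dl c j * pd a (fun y => k y 0 i) x)
        + dl a 0 * (-((x 0) ^ 2)⁻¹) * (2 * dl c 0 * k x i j + dl i 0 * k x c j
            + dl j 0 * k x c i - dl c i * k x 0 j - dl c j * k x 0 i)
        + (x 0)⁻¹ * (dl a 0 * covD k c i j x + dl c 0 * covD k a i j x - dl a c * covD k 0 i j x)
        + (x 0)⁻¹ * (dl a 0 * covD k c i j x + dl i 0 * covD k c a j x - dl a i * covD k c 0 j x)
        + (x 0)⁻¹ * (dl a 0 * covD k c i j x + dl j 0 * covD k c i a x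
            - dl a j * covD k c i 0 x) := by
  unfold covDD
  rw [chris_sum hx a c (fun l => covD k l i j x), chris_sum hx a i (fun l => covD k c l j x),
    chris_sum hx a j (fun l => covD k c i l x), pd_covD hsym hsmooth hx a c i j]
  ring


lemma dsum_c0 (X : Fin n → Fin n → ℝ) : (∑ a, ∑ c, dl c 0 * X a c) = ∑ a, X a 0 :=
  Finset.sum_congr rfl (fun a _ => dl_sum' 0 (X a))

lemma dsum_a0 (X : Fin n → Fin n → ℝ) : (∑ a, ∑ c, dl a 0 * X a c) = ∑ c, X 0 c := by
  have : ∀ a : Fin n, (∑ c, dl a 0 * X a c) = dl a 0 * ∑ c, X a c := by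
    intro a; rw [Finset.mul_sum]
  rw [Finset.sum_congr rfl (fun a _ => this a), dl_sum' 0 (fun a => ∑ c, X a c)]

lemma dsum_ca (X : Fin n → Fin n → ℝ) : (∑ a, ∑ c, dl c a * X a c) = ∑ a, X a a :=
  Finset.sum_congr rfl (fun a _ => dl_sum' a (X a))

lemma dsum_ac (X : Fin n → Fin n → ℝ) : (∑ a, ∑ c, dl a c * X a c) = ∑ a, X a a :=
  Finset.sum_congr rfl (fun a _ => dl_sum a (X a))

lemma sum_const_fin (r : ℝ) : (∑ _c : Fin n, r) = (n : ℝ) * r := by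
  rw [Finset.sum_const, Finset.card_univ, Fintype.card_fin, nsmul_eq_mul]

lemma dsum_constc (X : Fin n → ℝ) : (∑ a, ∑ _c : Fin n, X a) = (n : ℝ) * ∑ a, X a := by
  rw [Finset.sum_congr rfl (fun a (_ : a ∈ Finset.univ) => sum_const_fin (X a)),
    ← Finset.mul_sum]

lemma dsum_consta (X : Fin n → ℝ) : (∑ _a : Fin n, ∑ c, X c) = (n : ℝ) * ∑ c, X c :=
  sum_const_fin _


lemma dsum_a0c0 (X : Fin n → Fin n → ℝ) :
    (∑ a, ∑ c, dl a 0 * (dl c 0 * X a c)) = X 0 0 := by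
  rw [dsum_a0 (fun a c => dl c 0 * X a c), dl_sum' 0 (X 0)]

lemma dsum_a0a0 (X : Fin n → Fin n → ℝ) :
    (∑ a, ∑ c, dl a 0 * (dl a 0 * X a c)) = ∑ c, X 0 c := by
  rw [dsum_a0 (fun a c => dl a 0 * X a c)]
  simp [dl_self]

lemma dsum_a0ca (X : Fin n → Fin n → ℝ) :
    (∑ a, ∑ c, dl a 0 * (dl c a * X a c)) = X 0 0 := by
  rw [dsum_a0 (fun a c => dl c a * X a c), dl_sum' 0 (X 0)]

lemma sum_covDD (hsym : ∀ x i j, k x i j = k x j i)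
    (hsmooth : ∀ i j, ContDiffOn ℝ (⊤ : ℕ∞) (fun x => k x i j) (U n))
    {x : Fin n → ℝ} (hx : x ∈ U n) :
    (∑ a, ∑ c, covDD k a c a c x)
      = (∑ a, ∑ c, pd a (fun y => pd c (fun z => k z a c) y) x)
        + (x 0)⁻¹ * (2 * (∑ a, pd a (fun y => k y a 0) x))
        + (x 0)⁻¹ * (∑ c, pd 0 (fun y => k y c c) x)
        - (n : ℝ) * ((x 0)⁻¹ * (∑ a, pd a (fun y => k y 0 a) x))
        - ((x 0) ^ 2)⁻¹ * (∑ c, k x c c)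
        - (2 - (n : ℝ)) * (((x 0) ^ 2)⁻¹ * k x 0 0)
        + (4 - (n : ℝ)) * ((x 0)⁻¹ * (∑ c, covD k c 0 c x)) := by
  have hG : ∀ a c : Fin n, covDD k a c a c x
      = pd a (fun y => pd c (fun z => k z a c) y) x
        + (-(x 0)⁻¹ * pd a (fun y => k y 0 a) x)
        + (-(x 0)⁻¹ * covD k c 0 c x)
        + dl c 0 * ((x 0)⁻¹ * (2 * pd a (fun y => k y a c) x + pd a (fun y => k y c a) x
            + covD k a a c x + covD k c a a x))
        + dl a 0 * ((x 0)⁻¹ * pd a (fun y => k y c c) x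
            + 4 * ((x 0)⁻¹ * covD k c a c x) + ((x 0) ^ 2)⁻¹ * k x 0 a)
        + dl a 0 * (dl c 0 * (-((x 0) ^ 2)⁻¹ * (2 * k x a c + k x c a)))
        + dl a 0 * (dl a 0 * (-((x 0) ^ 2)⁻¹ * k x c c))
        + dl a 0 * (dl c a * (((x 0) ^ 2)⁻¹ * k x 0 c))
        + dl c a * (-(x 0)⁻¹ * pd a (fun y => k y 0 c) x)
        + dl a c * (-(x 0)⁻¹ * (covD k 0 a c x + covD k c a 0 x)) := by
    intro a c
    rw [covDD_eq hsym hsmooth hx a c a c]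
    simp only [dl_self]
    ring
  rw [Finset.sum_congr rfl (fun a _ => Finset.sum_congr rfl (fun c _ => hG a c))]
  simp only [Finset.sum_add_distrib, dsum_a0c0, dsum_a0a0, dsum_a0ca, dsum_c0, dsum_a0,
    dsum_ca, dsum_ac, dsum_constc, dsum_consta, dl_sum, dl_sum', dl_self, one_mul,
    sum_const_fin]
  simp only [mul_add, Finset.sum_add_distrib, ← Finset.mul_sum, sum_const_fin]
  ring


lemma U1_eq (hsym : ∀ x i j, k x i j = k x j i)
    {x : Fin n → ℝ} (hx : x ∈ U n) :
    (∑ c, covD k c 0 c x)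
      = (∑ a, pd a (fun y => k y 0 a) x)
        + (x 0)⁻¹ * (∑ c, k x c c) - (n : ℝ) * ((x 0)⁻¹ * k x 0 0)
        + (x 0)⁻¹ * (2 * k x 0 0) := by
  have hpt : ∀ c : Fin n, covD k c 0 c x
      = pd c (fun y => k y 0 c) x + (x 0)⁻¹ * k x c c + (-(x 0)⁻¹ * k x 0 0)
        + dl c 0 * ((x 0)⁻¹ * (k x 0 c + k x c 0)) := by
    intro c
    rw [covD_eq hsym hx c 0 c]
    simp only [dl_self]
    ring
  rw [Finset.sum_congr rfl (fun c _ => hpt c)]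
  simp only [Finset.sum_add_distrib, dl_sum', sum_const_fin, ← Finset.mul_sum]
  ring

lemma S2_eq (hsym : ∀ x i j, k x i j = k x j i) (x : Fin n → ℝ) :
    (∑ a, pd a (fun y => k y 0 a) x) = ∑ a, pd a (fun y => k y a 0) x :=
  Finset.sum_congr rfl (fun a _ =>
    congrArg (fun f => pd a f x) (funext (fun y => hsym y 0 a)))

lemma raise_eq (kk : (Fin n → ℝ) → Fin n → Fin n → ℝ) (z : Fin n → ℝ) (i j : Fin n) :
    raise kk z i j = (z 0) ^ 4 * kk z i j := by
  unfold raise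
  have hpt : ∀ a b : Fin n, binv z i a * binv z j b * kk z a b
      = dl i a * (dl j b * ((z 0) ^ 4 * kk z a b)) := by
    intro a b
    rw [binv_eq, binv_eq]
    ring
  rw [Finset.sum_congr rfl (fun a _ => Finset.sum_congr rfl (fun b _ => hpt a b))]
  simp only [← Finset.mul_sum, dl_sum]

lemma zdiff (m : ℤ) {x : Fin n → ℝ} (hx : x ∈ U n) :
    DifferentiableAt ℝ (fun y : Fin n → ℝ => (y 0) ^ m) x :=
  diff_comp0 ((hasDerivAt_zpow m (x 0) (Or.inl (ne_of_gt hx))).differentiableAt)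

lemma pd_zpow (m : ℤ) {x : Fin n → ℝ} (hx : x ∈ U n) (i : Fin n) :
    pd i (fun y : Fin n → ℝ => (y 0) ^ m) x = dl i 0 * ((m : ℝ) * (x 0) ^ (m - 1)) := by
  rw [show (fun y : Fin n → ℝ => (y 0) ^ m) = (fun y => (fun t : ℝ => t ^ m) (y 0)) from rfl,
    pd_comp0 (hasDerivAt_zpow m (x 0) (Or.inl (ne_of_gt hx))).differentiableAt,
    (hasDerivAt_zpow m (x 0) (Or.inl (ne_of_gt hx))).deriv, ite_to_dl]

lemma zform {z0 : ℝ} (hz : z0 ≠ 0) (w : ℝ) :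
    (z0 ^ (n + 1))⁻¹ * (z0 ^ 4 * w) = z0 ^ ((3 : ℤ) - (n : ℤ)) * w := by
  rw [← zpow_natCast z0 (n + 1), ← zpow_natCast z0 4, ← zpow_neg, ← mul_assoc,
    ← zpow_add₀ hz]
  congr 2
  push_cast
  ring


lemma rhs_inner (hsmooth : ∀ i j, ContDiffOn ℝ (⊤ : ℕ∞) (fun x => k x i j) (U n))
    {y : Fin n → ℝ} (hy : y ∈ U n) (i j : Fin n) :
    pd j (fun z => ((z 0) ^ (n + 1))⁻¹ * raise k z i j) y
      = (y 0) ^ ((3 : ℤ) - (n : ℤ)) * pd j (fun z => k z i j) y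
        + dl j 0 * ((((3 : ℤ) - (n : ℤ)) : ℝ) * ((y 0) ^ ((3 : ℤ) - (n : ℤ) - 1) * k y i j)) := by
  have h1 : pd j (fun z => ((z 0) ^ (n + 1))⁻¹ * raise k z i j) y
      = pd j (fun z => (z 0) ^ ((3 : ℤ) - (n : ℤ)) * k z i j) y := by
    apply pd_congr hy
    intro z hz
    rw [raise_eq, ← mul_assoc, mul_comm ((z 0) ^ (n+1))⁻¹ ((z 0) ^ 4), mul_assoc,
      ← zform (n := n) (ne_of_gt hz) (k z i j), ← mul_assoc,
      mul_comm ((z 0) ^ 4) ((z 0) ^ (n+1))⁻¹, mul_assoc]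
  rw [h1, pd_mul (zdiff _ hy) (kdiff hsmooth hy i j), pd_zpow _ hy]
  push_cast
  ring

lemma rhs1 (hsmooth : ∀ i j, ContDiffOn ℝ (⊤ : ℕ∞) (fun x => k x i j) (U n))
    {x : Fin n → ℝ} (hx : x ∈ U n) (i j : Fin n) :
    pd i (fun y => pd j (fun z => ((z 0) ^ (n + 1))⁻¹ * raise k z i j) y) x
      = (x 0) ^ ((3 : ℤ) - (n : ℤ)) * pd i (fun y => pd j (fun z => k z i j) y) x
        + dl i 0 * ((((3 : ℤ) - (n : ℤ)) : ℝ)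
            * ((x 0) ^ ((3 : ℤ) - (n : ℤ) - 1) * pd j (fun y => k y i j) x))
        + dl j 0 * ((((3 : ℤ) - (n : ℤ)) : ℝ)
            * ((x 0) ^ ((3 : ℤ) - (n : ℤ) - 1) * pd i (fun y => k y i j) x))
        + dl i 0 * (dl j 0 * ((((3 : ℤ) - (n : ℤ)) : ℝ) * (((3 : ℤ) - (n : ℤ) - 1 : ℤ) : ℝ)
            * ((x 0) ^ ((3 : ℤ) - (n : ℤ) - 2) * k x i j))) := by
  have h1 : pd i (fun y => pd j (fun z => ((z 0) ^ (n + 1))⁻¹ * raise k z i j) y) x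
      = pd i (fun y => (y 0) ^ ((3 : ℤ) - (n : ℤ)) * pd j (fun z => k z i j) y
          + dl j 0 * ((((3 : ℤ) - (n : ℤ)) : ℝ)
              * ((y 0) ^ ((3 : ℤ) - (n : ℤ) - 1) * k y i j))) x :=
    pd_congr hx (fun y hy => rhs_inner hsmooth hy i j) i
  rw [h1,
    pd_add ((zdiff _ hx).fun_mul (A1diff hsmooth hx j i j))
      ((((zdiff _ hx).fun_mul (kdiff hsmooth hx i j)).const_mul _).const_mul _),
    pd_mul (zdiff _ hx) (A1diff hsmooth hx j i j),
    pd_const_mul (((zdiff _ hx).fun_mul (kdiff hsmooth hx i j)).const_mul _),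
    pd_const_mul ((zdiff _ hx).fun_mul (kdiff hsmooth hx i j)),
    pd_mul (zdiff _ hx) (kdiff hsmooth hx i j),
    pd_zpow _ hx, pd_zpow _ hx]
  push_cast
  ring


lemma sum_rhs1 (hsmooth : ∀ i j, ContDiffOn ℝ (⊤ : ℕ∞) (fun x => k x i j) (U n))
    {x : Fin n → ℝ} (hx : x ∈ U n) :
    (∑ i, ∑ j, pd i (fun y => pd j (fun z => ((z 0) ^ (n + 1))⁻¹ * raise k z i j) y) x)
      = (x 0) ^ ((3 : ℤ) - (n : ℤ)) * (∑ a, ∑ c, pd a (fun y => pd c (fun z => k z a c) y) x)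
        + (3 - (n : ℝ)) * ((x 0) ^ ((3 : ℤ) - (n : ℤ) - 1) * (∑ a, pd a (fun y => k y 0 a) x))
        + (3 - (n : ℝ)) * ((x 0) ^ ((3 : ℤ) - (n : ℤ) - 1) * (∑ a, pd a (fun y => k y a 0) x))
        + (3 - (n : ℝ)) * ((2 - (n : ℝ)) * ((x 0) ^ ((3 : ℤ) - (n : ℤ) - 2) * k x 0 0)) := by
  rw [Finset.sum_congr rfl (fun i _ => Finset.sum_congr rfl (fun j _ => rhs1 hsmooth hx i j))]
  simp only [Finset.sum_add_distrib, dsum_a0c0, dsum_c0, dsum_a0]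
  simp only [← Finset.mul_sum]
  push_cast
  ring

lemma rhs2 (hsmooth : ∀ i j, ContDiffOn ℝ (⊤ : ℕ∞) (fun x => k x i j) (U n))
    {x : Fin n → ℝ} (hx : x ∈ U n) :
    pd 0 (fun y => ((y 0) ^ (n + 1))⁻¹ * ∑ i, raise k y i i) x
      = (x 0) ^ ((3 : ℤ) - (n : ℤ)) * (∑ c, pd 0 (fun y => k y c c) x)
        + (3 - (n : ℝ)) * ((x 0) ^ ((3 : ℤ) - (n : ℤ) - 1) * (∑ c, k x c c)) := by
  have h1 : pd 0 (fun y => ((y 0) ^ (n + 1))⁻¹ * ∑ i, raise k y i i) x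
      = pd 0 (fun y => (y 0) ^ ((3 : ℤ) - (n : ℤ)) * ∑ i, k y i i) x := by
    apply pd_congr hx
    intro z hz
    rw [Finset.sum_congr rfl (fun i (_ : i ∈ Finset.univ) => raise_eq k z i i),
      ← Finset.mul_sum, zform (n := n) (ne_of_gt hz)]
  have hd : DifferentiableAt ℝ (fun y => ∑ i, k y i i) x :=
    DifferentiableAt.fun_sum (fun i _ => kdiff hsmooth hx i i)
  rw [h1, pd_mul (zdiff _ hx) hd, pd_zpow _ hx,
    pd_sum (fun i _ => kdiff hsmooth hx i i), dl_self]
  push_cast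
  ring

lemma lhs_red (x : Fin n → ℝ) :
    (∑ a, ∑ c, ∑ i, ∑ j, binv x i a * binv x j c * covDD k a c i j x)
      = (x 0) ^ 4 * ∑ a, ∑ c, covDD k a c a c x := by
  have hpt : ∀ a c i j : Fin n, binv x i a * binv x j c * covDD k a c i j x
      = dl i a * (dl j c * ((x 0) ^ 4 * covDD k a c i j x)) := by
    intro a c i j
    rw [binv_eq, binv_eq]
    ring
  rw [Finset.sum_congr rfl (fun a _ => Finset.sum_congr rfl (fun c _ =>
    Finset.sum_congr rfl (fun i _ => Finset.sum_congr rfl (fun j _ => hpt a c i j))))]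
  simp only [← Finset.mul_sum, dl_sum']

lemma key (hsym : ∀ x i j, k x i j = k x j i)
    (hsmooth : ∀ i j, ContDiffOn ℝ (⊤ : ℕ∞) (fun x => k x i j) (U n))
    (x : Fin n → ℝ) (hx : 0 < x 0) :
    (∑ a, ∑ c, ∑ i, ∑ j, binv x i a * binv x j c * covDD k a c i j x)
      = (x 0) ^ (n + 1) *
          (∑ i, ∑ j, pd i (fun y => pd j (fun z => ((z 0) ^ (n + 1))⁻¹ * raise k z i j) y) x)
        + (x 0) ^ n *
            pd 0 (fun y => ((y 0) ^ (n + 1))⁻¹ * ∑ i, raise k y i i) x := by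
  have hxU : x ∈ U n := hx
  have h0 : x 0 ≠ 0 := ne_of_gt hx
  have e1 : (x 0) ^ ((3 : ℤ) - (n : ℤ)) = (x 0) ^ 3 * ((x 0) ^ n)⁻¹ := by
    rw [zpow_sub₀ h0, div_eq_mul_inv, zpow_natCast]
    norm_num
  have e2 : (x 0) ^ ((3 : ℤ) - (n : ℤ) - 1) = (x 0) ^ 2 * ((x 0) ^ n)⁻¹ := by
    rw [show (3 : ℤ) - (n : ℤ) - 1 = (2 : ℤ) - (n : ℤ) by ring, zpow_sub₀ h0,
      div_eq_mul_inv, zpow_natCast]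
    norm_num
  have e3 : (x 0) ^ ((3 : ℤ) - (n : ℤ) - 2) = (x 0) * ((x 0) ^ n)⁻¹ := by
    rw [show (3 : ℤ) - (n : ℤ) - 2 = (1 : ℤ) - (n : ℤ) by ring, zpow_sub₀ h0,
      div_eq_mul_inv, zpow_natCast]
    norm_num
  rw [lhs_red, sum_covDD hsym hsmooth hxU, U1_eq hsym hxU, sum_rhs1 hsmooth hxU,
    rhs2 hsmooth hxU, S2_eq hsym, e1, e2, e3]
  have hpn : (x 0) ^ n ≠ 0 := pow_ne_zero n h0
  field_simp
  ring

end Main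


end AuxDoubleDiv

/-- For `h̃ = h - (tr_b h) b`, one has
`DⁱDʲh̃_{ij} = (x¹)^{n+1} ∂_i∂_j((x¹)^{-(n+1)} h̃^{ij}) + (x¹)ⁿ ∂₁((x¹)^{-(n+1)} δ_{ij} h̃^{ij})`. -/
theorem double_div_formula {n : ℕ} [NeZero n]
    (h : (Fin n → ℝ) → Fin n → Fin n → ℝ)
    (hsym : ∀ x i j, h x i j = h x j i)
    (hsmooth : ∀ i j, ContDiffOn ℝ (⊤ : ℕ∞) (fun x => h x i j) {y : Fin n → ℝ | 0 < y 0})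
    (htilde : (Fin n → ℝ) → Fin n → Fin n → ℝ)
    (hdef : ∀ x i j, htilde x i j = h x i j - trB h x * bmet x i j)
    (x : Fin n → ℝ) (hx : 0 < x 0) :
    (∑ a, ∑ c, ∑ i, ∑ j, binv x i a * binv x j c * covDD htilde a c i j x)
      = (x 0) ^ (n + 1) *
          (∑ i, ∑ j, pd i (fun y => pd j (fun z => ((z 0) ^ (n + 1))⁻¹ * raise htilde z i j) y) x)
        + (x 0) ^ n *
            pd 0 (fun y => ((y 0) ^ (n + 1))⁻¹ * ∑ i, raise htilde y i i) x := by
  have htsym : ∀ y (i j : Fin n), htilde y i j = htilde y j i := by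
    intro y i j
    rw [hdef, hdef, hsym y i j]
    unfold bmet
    rcases eq_or_ne i j with hij | hij
    · rw [hij]
    · simp [hij, Ne.symm hij]
  have hcoordsq : ContDiffOn ℝ (⊤ : ℕ∞) (fun y : Fin n → ℝ => (y 0) ^ 2) (U n) :=
    (((ContinuousLinearMap.proj (R := ℝ) (φ := fun _ : Fin n => ℝ) 0).contDiff).pow 2).contDiffOn
  have hbmet : ∀ i j : Fin n, ContDiffOn ℝ (⊤ : ℕ∞) (fun y => bmet y i j) (U n) := by
    intro i j
    unfold bmet
    exact (hcoordsq.inv (fun y hy => pow_ne_zero 2 (ne_of_gt hy))).mul contDiffOn_const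
  have htrB : ContDiffOn ℝ (⊤ : ℕ∞) (fun y => trB h y) (U n) := by
    unfold trB binv
    apply ContDiffOn.sum
    intro i _
    apply ContDiffOn.sum
    intro j _
    exact (hcoordsq.mul contDiffOn_const).mul (hsmooth i j)
  have htsmooth : ∀ i j, ContDiffOn ℝ (⊤ : ℕ∞) (fun y => htilde y i j) (U n) := by
    intro i j
    have hfe : (fun y => htilde y i j) = (fun y => h y i j - trB h y * bmet y i j) :=
      funext fun y => hdef y i j
    rw [hfe]
    exact (hsmooth i j).sub (htrB.mul (hbmet i j))
  exact key htsym htsmooth x hx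
end

section
/- With G, φ, mⁱ, mⁱʲ as above and G₂^{ij}(f) = ½Gⁱ(Gʲ(f)) + ½Gʲ(Gⁱ(f)), the matrix trace satisfies ∫_Ω G₂^{ii}(f) dx = (mⁱmⁱ - ½mⁱⁱ)∫_Ω f dx - mⁱ∫_Ω xⁱ f dx + ½∫_Ω |x|² f dx. -/
open MeasureTheory
open scoped BigOperators

/-- `f` is smooth with compact support contained in `Ω`. -/
def SmoothCc {n : ℕ} (Ω : Set (Fin n → ℝ)) (f : (Fin n → ℝ) → ℝ) : Prop :=
  ContDiff ℝ (⊤ : ℕ∞) f ∧ HasCompactSupport f ∧ tsupport f ⊆ Ω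

namespace TraceG2Aux

variable {n : ℕ}

lemma pd_continuous {u : (Fin n → ℝ) → ℝ} (hu : ContDiff ℝ (⊤ : ℕ∞) u) (i : Fin n) :
    Continuous (pd i u) :=
  (hu.continuous_fderiv (by simp)).clm_apply continuous_const

lemma pd_hcs {u : (Fin n → ℝ) → ℝ} (hcs : HasCompactSupport u) (i : Fin n) :
    HasCompactSupport (pd i u) :=
  (hcs.fderiv ℝ).comp_left (g := fun L : (Fin n → ℝ) →L[ℝ] ℝ => L (Pi.single i 1)) rfl

lemma ibp {u : (Fin n → ℝ) → ℝ} (hu : ContDiff ℝ (⊤ : ℕ∞) u) (hcs : HasCompactSupport u)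
    (k i : Fin n) :
    ∫ x, x k * pd i u x = -((if k = i then 1 else 0) * ∫ x, u x) := by
  obtain ⟨D, hD⟩ := hu.lipschitzWith_of_hasCompactSupport hcs (by simp)
  have hproj : LipschitzWith 1 (fun x : Fin n → ℝ => x k) := LipschitzWith.eval k
  have H := LipschitzWith.integral_lineDeriv_mul_eq (μ := volume) hproj hD hcs (Pi.single i 1)
  have h1 : ∀ x : Fin n → ℝ, lineDeriv ℝ (fun x : Fin n → ℝ => x k) x (Pi.single i 1)
      = (if k = i then 1 else 0) := by
    intro x
    have hd : DifferentiableAt ℝ (fun x : Fin n → ℝ => x k) x :=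
      (ContinuousLinearMap.proj k : (Fin n → ℝ) →L[ℝ] ℝ).differentiableAt
    rw [hd.lineDeriv_eq_fderiv]
    have : fderiv ℝ (fun x : Fin n → ℝ => x k) x
        = (ContinuousLinearMap.proj k : (Fin n → ℝ) →L[ℝ] ℝ) :=
      (ContinuousLinearMap.proj k : (Fin n → ℝ) →L[ℝ] ℝ).fderiv
    rw [this]
    simp [Pi.single_apply]
  have h2 : ∀ x, lineDeriv ℝ u x (-Pi.single i 1) = -pd i u x := by
    intro x
    rw [(hu.differentiable (by simp)).differentiableAt.lineDeriv_eq_fderiv]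
    simp [pd]
  simp only [h1, h2] at H
  rw [integral_const_mul] at H
  rw [H, ← integral_neg]
  congr 1
  funext x
  ring

lemma smooth_mul_proj {u : (Fin n → ℝ) → ℝ} (hu : ContDiff ℝ (⊤ : ℕ∞) u) (k : Fin n) :
    ContDiff ℝ (⊤ : ℕ∞) (fun x => x k * u x) :=
  ((ContinuousLinearMap.proj k : (Fin n → ℝ) →L[ℝ] ℝ).contDiff).mul hu

lemma hcs_mul_proj {u : (Fin n → ℝ) → ℝ} (hcs : HasCompactSupport u) (k : Fin n) :
    HasCompactSupport (fun x => x k * u x) :=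
  hcs.mul_left

lemma pd_mul {u : (Fin n → ℝ) → ℝ} (hu : ContDiff ℝ (⊤ : ℕ∞) u) (k i : Fin n) (x : Fin n → ℝ) :
    pd i (fun y => y k * u y) x
      = (if k = i then 1 else 0) * u x + x k * pd i u x := by
  unfold pd
  have h1 : DifferentiableAt ℝ (fun y : Fin n → ℝ => y k) x :=
    (ContinuousLinearMap.proj k : (Fin n → ℝ) →L[ℝ] ℝ).differentiableAt
  have h2 : DifferentiableAt ℝ u x := (hu.differentiable (by simp)).differentiableAt
  rw [fderiv_fun_mul h1 h2]
  have h3 : fderiv ℝ (fun y : Fin n → ℝ => y k) x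
      = (ContinuousLinearMap.proj k : (Fin n → ℝ) →L[ℝ] ℝ) :=
    (ContinuousLinearMap.proj k : (Fin n → ℝ) →L[ℝ] ℝ).fderiv
  simp [h3, Pi.single_apply]
  ring

lemma ibp2 {u : (Fin n → ℝ) → ℝ} (hu : ContDiff ℝ (⊤ : ℕ∞) u) (hcs : HasCompactSupport u)
    (k i : Fin n) :
    ∫ x, x k * x k * pd i u x = -(2 * ((if k = i then 1 else 0) * ∫ x, x k * u x)) := by
  have h := ibp (smooth_mul_proj hu k) (hcs_mul_proj hcs k) k i
  have hint1 : Integrable (fun x : Fin n → ℝ => x k * u x) volume :=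
    (((continuous_apply k).mul hu.continuous).integrable_of_hasCompactSupport
      (hcs_mul_proj hcs k))
  have hint2 : Integrable (fun x : Fin n → ℝ => x k * (x k * pd i u x)) volume := by
    refine (((continuous_apply k).mul ((continuous_apply k).mul
      (pd_continuous hu i))).integrable_of_hasCompactSupport ?_)
    exact ((pd_hcs hcs i).mul_left).mul_left
  have e : ∀ x : Fin n → ℝ, x k * pd i (fun y => y k * u y) x
      = (if k = i then 1 else 0) * (x k * u x) + x k * (x k * pd i u x) := by
    intro x; rw [pd_mul hu k i x]; ring
  simp only [e] at h
  rw [integral_add (hint1.const_mul _) hint2, integral_const_mul] at h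
  have : ∫ x : Fin n → ℝ, x k * x k * pd i u x
      = ∫ x : Fin n → ℝ, x k * (x k * pd i u x) := by
    congr 1; funext x; ring
  rw [this]
  have h2 := h
  linarith [h2]


lemma setInt_eq {Ω : Set (Fin n → ℝ)} {g : (Fin n → ℝ) → ℝ} (hg : tsupport g ⊆ Ω)
    (w : (Fin n → ℝ) → ℝ) :
    ∫ x in Ω, w x * g x = ∫ x, w x * g x := by
  refine setIntegral_eq_integral_of_forall_compl_eq_zero (fun x hx => ?_)
  have : g x = 0 := image_eq_zero_of_notMem_tsupport (fun h => hx (hg h))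
  simp [this]

lemma keyA {Ω : Set (Fin n → ℝ)}
    {G : ((Fin n → ℝ) → ℝ) → (Fin n → ℝ) → Fin n → ℝ}
    {φ : (Fin n → ℝ) → ℝ} (hφ : SmoothCc Ω φ)
    (hmaps : ∀ f, SmoothCc Ω f → ∀ i, SmoothCc Ω (fun x => G f x i))
    (hdiv : ∀ f, SmoothCc Ω f → ∀ x,
      (∑ i, pd i (fun y => G f y i) x) = f x - φ x * ∫ y in Ω, f y)
    {g : (Fin n → ℝ) → ℝ} (hg : SmoothCc Ω g) (k : Fin n) :
    ∫ x, G g x k = (∫ x in Ω, x k * φ x) * (∫ x in Ω, g x) - ∫ x in Ω, x k * g x := by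
  have hGi : ∀ i, SmoothCc Ω (fun x => G g x i) := hmaps g hg
  have h1 : ∀ i : Fin n, ∫ x, x k * pd i (fun y => G g y i) x
      = -((if k = i then 1 else 0) * ∫ x, G g x i) :=
    fun i => ibp (hGi i).1 (hGi i).2.1 k i
  have hsum : ∑ i, ∫ x, x k * pd i (fun y => G g y i) x = -∫ x, G g x k := by
    simp only [h1, ite_mul, one_mul, zero_mul, apply_ite (fun r : ℝ => -r), neg_zero]
    rw [Finset.sum_ite_eq]
    simp
  have hswap : ∑ i : Fin n, ∫ x, x k * pd i (fun y => G g y i) x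
      = ∫ x, x k * (g x - φ x * ∫ y in Ω, g y) := by
    rw [← integral_finset_sum]
    · congr 1
      funext x
      rw [← Finset.mul_sum, hdiv g hg x]
    · intro i _
      refine (((continuous_apply k).mul (pd_continuous (hGi i).1 i)).integrable_of_hasCompactSupport ?_)
      exact (pd_hcs (hGi i).2.1 i).mul_left
  have hintg : Integrable (fun x : Fin n → ℝ => x k * g x) volume :=
    ((continuous_apply k).mul hg.1.continuous).integrable_of_hasCompactSupport
      (hcs_mul_proj hg.2.1 k)
  have hintφ : Integrable (fun x : Fin n → ℝ => x k * φ x) volume :=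
    ((continuous_apply k).mul hφ.1.continuous).integrable_of_hasCompactSupport
      (hcs_mul_proj hφ.2.1 k)
  have hsplit : ∫ x, x k * (g x - φ x * ∫ y in Ω, g y)
      = (∫ x, x k * g x) - (∫ y in Ω, g y) * ∫ x, x k * φ x := by
    have e : ∀ x : Fin n → ℝ, x k * (g x - φ x * ∫ y in Ω, g y)
        = x k * g x - (∫ y in Ω, g y) * (x k * φ x) := by intro x; ring
    simp only [e]
    rw [integral_sub hintg (hintφ.const_mul _), integral_const_mul]
  rw [hswap, hsplit] at hsum
  have e1 : ∫ x in Ω, x k * g x = ∫ x, x k * g x := setInt_eq hg.2.2 _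
  have e2 : ∫ x in Ω, x k * φ x = ∫ x, x k * φ x := setInt_eq hφ.2.2 _
  have e3 : ∫ x in Ω, g x = ∫ x, g x := by
    simpa using setInt_eq hg.2.2 (fun _ => (1:ℝ))
  rw [e1, e2]
  rw [e3] at hsum ⊢
  linear_combination hsum

lemma keyB {Ω : Set (Fin n → ℝ)}
    {G : ((Fin n → ℝ) → ℝ) → (Fin n → ℝ) → Fin n → ℝ}
    {φ : (Fin n → ℝ) → ℝ} (hφ : SmoothCc Ω φ)
    (hmaps : ∀ f, SmoothCc Ω f → ∀ i, SmoothCc Ω (fun x => G f x i))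
    (hdiv : ∀ f, SmoothCc Ω f → ∀ x,
      (∑ i, pd i (fun y => G f y i) x) = f x - φ x * ∫ y in Ω, f y)
    {g : (Fin n → ℝ) → ℝ} (hg : SmoothCc Ω g) (k : Fin n) :
    ∫ x, x k * G g x k
      = (1/2) * ((∫ x in Ω, x k * x k * φ x) * (∫ x in Ω, g x)
          - ∫ x in Ω, x k * x k * g x) := by
  have hGi : ∀ i, SmoothCc Ω (fun x => G g x i) := hmaps g hg
  have h1 : ∀ i : Fin n, ∫ x, x k * x k * pd i (fun y => G g y i) x
      = -(2 * ((if k = i then 1 else 0) * ∫ x, x k * G g x i)) :=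
    fun i => ibp2 (hGi i).1 (hGi i).2.1 k i
  have hsum : ∑ i, ∫ x, x k * x k * pd i (fun y => G g y i) x
      = -(2 * ∫ x, x k * G g x k) := by
    simp only [h1, ite_mul, one_mul, zero_mul, mul_ite, mul_zero,
      apply_ite (fun r : ℝ => -r), neg_zero]
    rw [Finset.sum_ite_eq]
    simp
  have hswap : ∑ i : Fin n, ∫ x, x k * x k * pd i (fun y => G g y i) x
      = ∫ x, x k * x k * (g x - φ x * ∫ y in Ω, g y) := by
    rw [← integral_finset_sum]
    · congr 1
      funext x
      rw [← Finset.mul_sum, hdiv g hg x]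
    · intro i _
      refine ((((continuous_apply k).mul (continuous_apply k)).mul
        (pd_continuous (hGi i).1 i)).integrable_of_hasCompactSupport ?_)
      exact (pd_hcs (hGi i).2.1 i).mul_left
  have hintg : Integrable (fun x : Fin n → ℝ => x k * x k * g x) volume :=
    (((continuous_apply k).mul (continuous_apply k)).mul
      hg.1.continuous).integrable_of_hasCompactSupport hg.2.1.mul_left
  have hintφ : Integrable (fun x : Fin n → ℝ => x k * x k * φ x) volume :=
    (((continuous_apply k).mul (continuous_apply k)).mul
      hφ.1.continuous).integrable_of_hasCompactSupport hφ.2.1.mul_left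
  have hsplit : ∫ x, x k * x k * (g x - φ x * ∫ y in Ω, g y)
      = (∫ x, x k * x k * g x) - (∫ y in Ω, g y) * ∫ x, x k * x k * φ x := by
    have e : ∀ x : Fin n → ℝ, x k * x k * (g x - φ x * ∫ y in Ω, g y)
        = x k * x k * g x - (∫ y in Ω, g y) * (x k * x k * φ x) := by intro x; ring
    simp only [e]
    rw [integral_sub hintg (hintφ.const_mul _), integral_const_mul]
  rw [hswap, hsplit] at hsum
  have e1 : ∫ x in Ω, x k * x k * g x = ∫ x, x k * x k * g x := setInt_eq hg.2.2 _
  have e2 : ∫ x in Ω, x k * x k * φ x = ∫ x, x k * x k * φ x := setInt_eq hφ.2.2 _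
  have e3 : ∫ x in Ω, g x = ∫ x, g x := by
    simpa using setInt_eq hg.2.2 (fun _ => (1:ℝ))
  rw [e1, e2]
  rw [e3] at hsum ⊢
  linear_combination hsum/2

end TraceG2Aux

open TraceG2Aux

/-- With `G₂^{ij}(f) = ½Gⁱ(Gʲ(f)) + ½Gʲ(Gⁱ(f))`, the matrix trace satisfies
`∫ G₂^{ii}(f) = (mⁱmⁱ - ½mⁱⁱ) ∫ f - mⁱ ∫ xⁱ f + ½ ∫ |x|² f`. -/
theorem integral_trace_G2 {n : ℕ} (Ω : Set (Fin n → ℝ)) (hΩ : IsOpen Ω)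
    (hbd : Bornology.IsBounded Ω)
    (G : ((Fin n → ℝ) → ℝ) → (Fin n → ℝ) → Fin n → ℝ)
    (hadd : ∀ f g, G (fun x => f x + g x) = fun x i => G f x i + G g x i)
    (hsmul : ∀ (c : ℝ) f, G (fun x => c * f x) = fun x i => c * G f x i)
    (hmaps : ∀ f, SmoothCc Ω f → ∀ i, SmoothCc Ω (fun x => G f x i))
    (φ : (Fin n → ℝ) → ℝ) (hφ : SmoothCc Ω φ) (hφ1 : (∫ x in Ω, φ x) = 1)
    (hdiv : ∀ f, SmoothCc Ω f → ∀ x,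
      (∑ i, pd i (fun y => G f y i) x) = f x - φ x * ∫ y in Ω, f y)
    (f : (Fin n → ℝ) → ℝ) (hf : SmoothCc Ω f) :
    (∫ x in Ω, ∑ i, ((1/2) * G (fun w => G f w i) x i + (1/2) * G (fun w => G f w i) x i))
      = ((∑ i, (∫ x in Ω, x i * φ x) * (∫ x in Ω, x i * φ x))
            - (1/2) * ∑ i, ∫ x in Ω, x i * x i * φ x) * (∫ x in Ω, f x)
        - (∑ i, (∫ x in Ω, x i * φ x) * ∫ x in Ω, x i * f x)
        + (1/2) * ∫ x in Ω, (∑ i, (x i) ^ 2) * f x := by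
  classical
  have hGf : ∀ i, SmoothCc Ω (fun x => G f x i) := hmaps f hf
  have hGGf : ∀ i, SmoothCc Ω (fun x => G (fun w => G f w i) x i) :=
    fun i => hmaps _ (hGf i) i
  have e0 : (∫ x in Ω, ∑ i, ((1/2) * G (fun w => G f w i) x i
        + (1/2) * G (fun w => G f w i) x i))
      = ∫ x in Ω, ∑ i, G (fun w => G f w i) x i := by
    congr 1
    funext x
    exact Finset.sum_congr rfl fun i _ => by ring
  have e1 : (∫ x in Ω, ∑ i, G (fun w => G f w i) x i)
      = ∫ x, ∑ i, G (fun w => G f w i) x i := by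
    refine setIntegral_eq_integral_of_forall_compl_eq_zero fun x hx => ?_
    refine Finset.sum_eq_zero fun i _ => ?_
    exact image_eq_zero_of_notMem_tsupport
      (f := fun x => G (fun w => G f w i) x i) (fun h => hx ((hGGf i).2.2 h))
  have e2 : (∫ x, ∑ i, G (fun w => G f w i) x i)
      = ∑ i, ∫ x, G (fun w => G f w i) x i :=
    integral_finset_sum _ fun i _ =>
      (hGGf i).1.continuous.integrable_of_hasCompactSupport (hGGf i).2.1
  have e3 : ∀ i, (∫ x, G (fun w => G f w i) x i)
      = (∫ x in Ω, x i * φ x) * (∫ x in Ω, G f x i) - ∫ x in Ω, x i * G f x i :=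
    fun i => keyA hφ hmaps hdiv (hGf i) i
  have e4 : ∀ i, (∫ x in Ω, G f x i)
      = (∫ x in Ω, x i * φ x) * (∫ x in Ω, f x) - ∫ x in Ω, x i * f x := by
    intro i
    have h := keyA hφ hmaps hdiv hf i
    rw [← h]
    exact setIntegral_eq_integral_of_forall_compl_eq_zero fun x hx =>
      image_eq_zero_of_notMem_tsupport (f := fun x => G f x i)
        (fun hm => hx ((hGf i).2.2 hm))
  have e5 : ∀ i, (∫ x in Ω, x i * G f x i)
      = (1/2) * ((∫ x in Ω, x i * x i * φ x) * (∫ x in Ω, f x)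
          - ∫ x in Ω, x i * x i * f x) := by
    intro i
    have h := keyB hφ hmaps hdiv hf i
    rw [← h]
    exact setInt_eq (hGf i).2.2 _
  have e6 : (∫ x in Ω, (∑ i, (x i) ^ 2) * f x)
      = ∑ i, ∫ x in Ω, x i * x i * f x := by
    have hx : ∀ x : Fin n → ℝ, (∑ i, (x i) ^ 2) * f x = ∑ i, x i * x i * f x := by
      intro x
      rw [Finset.sum_mul]
      exact Finset.sum_congr rfl fun i _ => by ring
    rw [show (∫ x in Ω, (∑ i, (x i) ^ 2) * f x) = ∫ x in Ω, ∑ i, x i * x i * f x by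
      congr 1; funext x; exact hx x]
    refine integral_finset_sum _ fun i _ => Integrable.restrict ?_
    exact (((continuous_apply i).mul (continuous_apply i)).mul
      hf.1.continuous).integrable_of_hasCompactSupport hf.2.1.mul_left
  rw [e0, e1, e2, e6]
  have emain : ∑ i, ∫ x, G (fun w => G f w i) x i
      = ∑ i : Fin n, ((∫ x in Ω, x i * φ x)
            * ((∫ x in Ω, x i * φ x) * (∫ x in Ω, f x) - ∫ x in Ω, x i * f x)
          - (1/2) * ((∫ x in Ω, x i * x i * φ x) * (∫ x in Ω, f x)
              - ∫ x in Ω, x i * x i * f x)) := by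
    refine Finset.sum_congr rfl fun i _ => ?_
    rw [e3 i, e4 i, e5 i]
  rw [emain]
  simp only [mul_sub, Finset.sum_sub_distrib, ← mul_assoc, ← Finset.sum_mul, ← Finset.mul_sum]
  ring
end

section
/- Define the operator L(A) = ∂_i∂_j A^{ij} + ∂₁((x¹)⁻¹ A^{ii}) on smooth compactly supported symmetric matrix-valued functions A on Ω ⊂ Hⁿ. Then for every such A, the n+1 integrals ∫_Ω L(A) dx, ∫_Ω xᵖ L(A) dx for p = 2,...,n, and ∫_Ω |x|² L(A) dx all vanish. -/
open MeasureTheory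
open scoped BigOperators

/-- The operator `L(A) = ∂_i∂_j A^{ij} + ∂₁((x¹)⁻¹ A^{ii})`. -/
noncomputable def Lop {n : ℕ} [NeZero n] (A : (Fin n → ℝ) → Fin n → Fin n → ℝ)
    (x : Fin n → ℝ) : ℝ :=
  (∑ i, ∑ j, pd i (fun y => pd j (fun z => A z i j) y) x)
    + pd 0 (fun y => (y 0)⁻¹ * ∑ i, A y i i) x

namespace AuxL

variable {n : ℕ}

lemma pd_zero_of_nmem {f : (Fin n → ℝ) → ℝ} {i : Fin n} {x : Fin n → ℝ}
    (hx : x ∉ tsupport f) : pd i f x = 0 := by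
  have h : f =ᶠ[nhds x] (fun _ => (0:ℝ)) := by
    filter_upwards [(isClosed_tsupport f).isOpen_compl.mem_nhds hx] with y hy
    exact image_eq_zero_of_notMem_tsupport hy
  simp [pd, h.fderiv_eq]

lemma support_pd {f : (Fin n → ℝ) → ℝ} {i : Fin n} :
    Function.support (pd i f) ⊆ tsupport f := fun x hx => by
  by_contra h; exact hx (pd_zero_of_nmem h)

lemma tsupport_pd {f : (Fin n → ℝ) → ℝ} {i : Fin n} :
    tsupport (pd i f) ⊆ tsupport f :=
  closure_minimal support_pd (isClosed_tsupport f)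

lemma hcs_pd {f : (Fin n → ℝ) → ℝ} (hf : HasCompactSupport f) (i : Fin n) :
    HasCompactSupport (pd i f) :=
  hf.mono' support_pd

lemma contDiff_pd {f : (Fin n → ℝ) → ℝ} (hf : ContDiff ℝ (⊤ : ℕ∞) f) (i : Fin n) :
    ContDiff ℝ (⊤ : ℕ∞) (pd i f) :=
  (hf.fderiv_right (by simp)).clm_apply contDiff_const

lemma integral_pd_eq_zero {f : (Fin n → ℝ) → ℝ} (hf : ContDiff ℝ (⊤ : ℕ∞) f)
    (h2f : HasCompactSupport f) (i : Fin n) : (∫ x, pd i f x) = 0 := by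
  obtain ⟨C, hC⟩ := ContDiff.lipschitzWith_of_hasCompactSupport h2f hf (by simp)
  have key := LipschitzWith.integral_lineDeriv_mul_eq (μ := volume)
      (f := fun _ : Fin n → ℝ => (1:ℝ)) (LipschitzWith.const 1) hC h2f (Pi.single i 1)
  have hconst : ∀ y : Fin n → ℝ, lineDeriv ℝ (fun _ : Fin n → ℝ => (1:ℝ)) y (Pi.single i 1) = 0 :=
    fun y => by simp [lineDeriv]
  simp only [hconst, zero_mul, integral_zero, mul_one] at key
  have h2 : ∀ x, lineDeriv ℝ f x (-(Pi.single i 1)) = - pd i f x := by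
    intro x
    rw [DifferentiableAt.lineDeriv_eq_fderiv ((hf.differentiable (by simp)).differentiableAt)]
    simp [pd]
  simp only [h2, integral_neg] at key
  linarith


lemma pd_mul {φ f : (Fin n → ℝ) → ℝ} (hφ : ContDiff ℝ (⊤ : ℕ∞) φ) (hf : ContDiff ℝ (⊤ : ℕ∞) f)
    (i : Fin n) (x : Fin n → ℝ) :
    pd i (fun y => φ y * f y) x = φ x * pd i f x + pd i φ x * f x := by
  unfold pd
  rw [fderiv_fun_mul ((hφ.differentiable (by simp)).differentiableAt)
    ((hf.differentiable (by simp)).differentiableAt)]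
  simp
  ring

lemma ibp {φ f : (Fin n → ℝ) → ℝ} (hφ : ContDiff ℝ (⊤ : ℕ∞) φ)
    (hf : ContDiff ℝ (⊤ : ℕ∞) f) (h2f : HasCompactSupport f) (i : Fin n) :
    (∫ x, φ x * pd i f x) = - ∫ x, pd i φ x * f x := by
  have hcs : HasCompactSupport (fun x => φ x * f x) := h2f.mul_left
  have key := integral_pd_eq_zero (hφ.mul hf) hcs i
  simp only [pd_mul hφ hf] at key
  have h1 : Integrable (fun x => φ x * pd i f x) :=
    (hφ.continuous.mul (contDiff_pd hf i).continuous).integrable_of_hasCompactSupport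
      ((hcs_pd h2f i).mul_left)
  have h2 : Integrable (fun x => pd i φ x * f x) :=
    ((contDiff_pd hφ i).continuous.mul hf.continuous).integrable_of_hasCompactSupport
      h2f.mul_left
  rw [integral_add h1 h2] at key
  linarith

lemma pd_proj (i p : Fin n) (x : Fin n → ℝ) :
    pd i (fun y => y p) x = if p = i then 1 else 0 := by
  have h : fderiv ℝ (fun y : Fin n → ℝ => y p) x
      = (ContinuousLinearMap.proj p : (Fin n → ℝ) →L[ℝ] ℝ) :=
    (ContinuousLinearMap.proj p : (Fin n → ℝ) →L[ℝ] ℝ).fderiv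
  simp [pd, h, Pi.single_apply]

lemma pd_const (i : Fin n) (c : ℝ) (x : Fin n → ℝ) :
    pd i (fun _ => c) x = 0 := by
  simp [pd]

lemma pd_sq (i : Fin n) (x : Fin n → ℝ) :
    pd i (fun y => ∑ j, (y j) ^ 2) x = 2 * x i := by
  have hj : ∀ j : Fin n, HasFDerivAt (fun y : Fin n → ℝ => (y j) ^ 2)
      ((2 * x j) • (ContinuousLinearMap.proj j : (Fin n → ℝ) →L[ℝ] ℝ)) x := by
    intro j
    have h1 : HasFDerivAt (fun y : Fin n → ℝ => y j)
        (ContinuousLinearMap.proj j : (Fin n → ℝ) →L[ℝ] ℝ) x :=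
      (ContinuousLinearMap.proj j : (Fin n → ℝ) →L[ℝ] ℝ).hasFDerivAt
    have h2 := h1.mul h1
    have he : (fun y : Fin n → ℝ => (y j) ^ 2) = fun y => y j * y j := by
      funext y; ring
    rw [he]
    rw [two_mul, add_smul]
    exact h2
  have h : HasFDerivAt (fun y : Fin n → ℝ => ∑ j, (y j) ^ 2)
      (∑ j, (2 * x j) • (ContinuousLinearMap.proj j : (Fin n → ℝ) →L[ℝ] ℝ)) x :=
    HasFDerivAt.fun_sum (fun j _ => hj j)
  rw [pd, h.fderiv]
  simp [Pi.single_apply, mul_ite, Finset.sum_ite_eq]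


lemma pd_const_mul {f : (Fin n → ℝ) → ℝ} (hf : ContDiff ℝ (⊤ : ℕ∞) f) (c : ℝ) (j : Fin n)
    (x : Fin n → ℝ) : pd j (fun y => c * f y) x = c * pd j f x := by
  unfold pd
  rw [fderiv_const_mul ((hf.differentiable (by simp)).differentiableAt)]
  simp

lemma contDiff_inv_mul [NeZero n] {t : (Fin n → ℝ) → ℝ} (ht : ContDiff ℝ (⊤ : ℕ∞) t)
    (hsupp : ∀ x ∈ tsupport t, 0 < x 0) :
    ContDiff ℝ (⊤ : ℕ∞) (fun x : Fin n → ℝ => (x 0)⁻¹ * t x) := by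
  rw [contDiff_iff_contDiffAt]
  intro x
  by_cases hx : x ∈ tsupport t
  · have h0 : x 0 ≠ 0 := (hsupp x hx).ne'
    have hproj : ContDiffAt ℝ (⊤ : ℕ∞) (fun y : Fin n → ℝ => y 0) x :=
      (ContinuousLinearMap.proj (R := ℝ) (φ := fun _ : Fin n => ℝ) 0).contDiff.contDiffAt
    exact (hproj.inv h0).mul ht.contDiffAt
  · have hev : (fun y : Fin n → ℝ => (y 0)⁻¹ * t y) =ᶠ[nhds x] (fun _ => (0:ℝ)) := by
      filter_upwards [(isClosed_tsupport t).isOpen_compl.mem_nhds hx] with y hy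
      simp [image_eq_zero_of_notMem_tsupport hy]
    exact (contDiffAt_const (c := (0:ℝ))).congr_of_eventuallyEq hev

end AuxL

/-- For every compactly supported smooth symmetric `A` on `Ω ⊂ Hⁿ`, the `n+1`
integrals of `L(A)` against `1`, `xᵖ` (p = 2,…,n), `|x|²` all vanish. -/
theorem integrability_conditions_L {n : ℕ} [NeZero n] (Ω : Set (Fin n → ℝ))
    (hΩ : IsOpen Ω) (hbd : Bornology.IsBounded Ω)
    (hcl : closure Ω ⊆ {y : Fin n → ℝ | 0 < y 0})
    (A : (Fin n → ℝ) → Fin n → Fin n → ℝ)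
    (hcc : ∀ i j, SmoothCc Ω (fun x => A x i j))
    (hsym : ∀ x i j, A x i j = A x j i) :
    (∫ x in Ω, Lop A x) = 0
    ∧ (∀ p : Fin n, p ≠ 0 → (∫ x in Ω, x p * Lop A x) = 0)
    ∧ (∫ x in Ω, (∑ i, (x i) ^ 2) * Lop A x) = 0 := by
  have hA : ∀ i j, ContDiff ℝ (⊤ : ℕ∞) (fun x => A x i j) := fun i j => (hcc i j).1
  have hAcs : ∀ i j, HasCompactSupport (fun x => A x i j) := fun i j => (hcc i j).2.1
  have hAts : ∀ i j, tsupport (fun x => A x i j) ⊆ Ω := fun i j => (hcc i j).2.2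
  -- trace
  have htr : ContDiff ℝ (⊤ : ℕ∞) (fun x : Fin n → ℝ => ∑ i, A x i i) :=
    ContDiff.sum (fun i _ => hA i i)
  have htr_ts : tsupport (fun x : Fin n → ℝ => ∑ i, A x i i)
      ⊆ ⋃ i : Fin n, tsupport (fun x => A x i i) := by
    apply closure_minimal _ (isClosed_iUnion_of_finite fun i => isClosed_tsupport _)
    intro x hx
    simp only [Function.mem_support] at hx
    by_contra h
    simp only [Set.mem_iUnion, not_exists] at h
    exact hx (Finset.sum_eq_zero fun i _ =>
      image_eq_zero_of_notMem_tsupport (f := fun y => A y i i) (x := x) (h i))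
  have htr_cs : HasCompactSupport (fun x : Fin n → ℝ => ∑ i, A x i i) :=
    IsCompact.of_isClosed_subset (isCompact_iUnion fun i => hAcs i i)
      (isClosed_tsupport _) htr_ts
  have htr_pos : ∀ x ∈ tsupport (fun x : Fin n → ℝ => ∑ i, A x i i), 0 < x 0 := by
    intro x hx
    obtain ⟨i, hxi⟩ := Set.mem_iUnion.1 (htr_ts hx)
    exact hcl (subset_closure (hAts i i hxi))
  -- the function g
  have hg : ContDiff ℝ (⊤ : ℕ∞) (fun y : Fin n → ℝ => (y 0)⁻¹ * ∑ i, A y i i) :=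
    AuxL.contDiff_inv_mul htr htr_pos
  have hg_cs : HasCompactSupport (fun y : Fin n → ℝ => (y 0)⁻¹ * ∑ i, A y i i) :=
    htr_cs.mul_left
  have hg_ts : tsupport (fun y : Fin n → ℝ => (y 0)⁻¹ * ∑ i, A y i i) ⊆ Ω := by
    have h1 : Function.support (fun y : Fin n → ℝ => (y 0)⁻¹ * ∑ i, A y i i)
        ⊆ tsupport (fun x : Fin n → ℝ => ∑ i, A x i i) := by
      intro x hx
      have hne : (∑ i, A x i i) ≠ 0 := by
        intro h0
        apply hx
        simp [h0]
      exact subset_closure hne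
    exact (closure_minimal h1 (isClosed_tsupport _)).trans
      (htr_ts.trans (Set.iUnion_subset fun i => hAts i i))
  -- vanishing of Lop outside Ω
  have hLop0 : ∀ x, x ∉ Ω → Lop A x = 0 := by
    intro x hx
    have h1 : ∀ i j : Fin n, pd i (fun y => pd j (fun z => A z i j) y) x = 0 := by
      intro i j
      exact AuxL.pd_zero_of_nmem (fun hmem => hx (hAts i j (AuxL.tsupport_pd hmem)))
    have h2 : pd 0 (fun y : Fin n → ℝ => (y 0)⁻¹ * ∑ i, A y i i) x = 0 :=
      AuxL.pd_zero_of_nmem (fun hmem => hx (hg_ts hmem))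
    unfold Lop
    simp [h1, h2]
  have hred : ∀ φ : (Fin n → ℝ) → ℝ, (∫ x in Ω, φ x * Lop A x) = ∫ x, φ x * Lop A x :=
    fun φ => setIntegral_eq_integral_of_forall_compl_eq_zero
      (fun x hx => by rw [hLop0 x hx, mul_zero])
  -- smoothness of inner derivatives
  have hpdpd_sm : ∀ i j : Fin n, ContDiff ℝ (⊤ : ℕ∞) (pd j (fun z => A z i j)) :=
    fun i j => AuxL.contDiff_pd (hA i j) j
  have hpdpd_cs : ∀ i j : Fin n, HasCompactSupport (pd j (fun z => A z i j)) :=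
    fun i j => AuxL.hcs_pd (hAcs i j) j
  -- splitting lemma
  have hsplit : ∀ φ : (Fin n → ℝ) → ℝ, ContDiff ℝ (⊤ : ℕ∞) φ →
      (∫ x, φ x * Lop A x)
        = (∑ i, ∑ j, ∫ x, φ x * pd i (fun y => pd j (fun z => A z i j) y) x)
          + ∫ x, φ x * pd 0 (fun y => (y 0)⁻¹ * ∑ i, A y i i) x := by
    intro φ hφ
    have hint1 : ∀ i j : Fin n,
        Integrable (fun x => φ x * pd i (fun y => pd j (fun z => A z i j) y) x) := by
      intro i j
      exact (hφ.continuous.mul (AuxL.contDiff_pd (hpdpd_sm i j) i).continuous).integrable_of_hasCompactSupport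
        ((AuxL.hcs_pd (hpdpd_cs i j) i).mul_left)
    have hint2 : Integrable
        (fun x => φ x * pd 0 (fun y : Fin n → ℝ => (y 0)⁻¹ * ∑ i, A y i i) x) :=
      (hφ.continuous.mul (AuxL.contDiff_pd hg 0).continuous).integrable_of_hasCompactSupport
        ((AuxL.hcs_pd hg_cs 0).mul_left)
    have hintsum : Integrable
        (fun x => ∑ i, ∑ j, φ x * pd i (fun y => pd j (fun z => A z i j) y) x) :=
      integrable_finset_sum _ (fun i _ => integrable_finset_sum _ (fun j _ => hint1 i j))
    have heq : (fun x => φ x * Lop A x)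
        = fun x => (∑ i, ∑ j, φ x * pd i (fun y => pd j (fun z => A z i j) y) x)
            + φ x * pd 0 (fun y : Fin n → ℝ => (y 0)⁻¹ * ∑ i, A y i i) x := by
      funext x
      unfold Lop
      rw [mul_add, Finset.mul_sum]
      congr 1
      exact Finset.sum_congr rfl fun i _ => Finset.mul_sum _ _ _
    rw [heq, integral_add hintsum hint2]
    congr 1
    rw [integral_finset_sum _ (fun i _ => integrable_finset_sum _ (fun j _ => hint1 i j))]
    exact Finset.sum_congr rfl fun i _ => integral_finset_sum _ (fun j _ => hint1 i j)
  -- part 1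
  have part1 : (∫ x in Ω, Lop A x) = 0 := by
    have hred1 : (∫ x in Ω, Lop A x) = ∫ x, Lop A x :=
      setIntegral_eq_integral_of_forall_compl_eq_zero (fun x hx => hLop0 x hx)
    have h1 := hsplit (fun _ => 1) contDiff_const
    simp only [one_mul] at h1
    rw [hred1, h1,
      Finset.sum_eq_zero (fun i _ => Finset.sum_eq_zero fun j _ =>
        AuxL.integral_pd_eq_zero (hpdpd_sm i j) (hpdpd_cs i j) i),
      AuxL.integral_pd_eq_zero hg hg_cs 0, add_zero]
  -- part 2
  have part2 : ∀ p : Fin n, p ≠ 0 → (∫ x in Ω, x p * Lop A x) = 0 := by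
    intro p hp
    have hφ : ContDiff ℝ (⊤ : ℕ∞) (fun y : Fin n → ℝ => y p) :=
      (ContinuousLinearMap.proj (R := ℝ) (φ := fun _ : Fin n => ℝ) p).contDiff
    rw [hred _, hsplit _ hφ]
    have hterm : ∀ i j : Fin n,
        (∫ x, x p * pd i (fun y => pd j (fun z => A z i j) y) x) = 0 := by
      intro i j
      rw [AuxL.ibp hφ (hpdpd_sm i j) (hpdpd_cs i j) i, neg_eq_zero]
      have hz : ∀ x : Fin n → ℝ,
          pd i (fun y : Fin n → ℝ => y p) x * pd j (fun z => A z i j) x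
            = if p = i then pd j (fun z => A z i j) x else 0 := by
        intro x
        rw [AuxL.pd_proj]
        split_ifs <;> ring
      simp only [hz]
      by_cases hip : p = i
      · simp only [if_pos hip]
        exact AuxL.integral_pd_eq_zero (hA i j) (hAcs i j) j
      · simp only [if_neg hip, integral_zero]
    have hgterm :
        (∫ x, x p * pd 0 (fun y : Fin n → ℝ => (y 0)⁻¹ * ∑ i, A y i i) x) = 0 := by
      rw [AuxL.ibp hφ hg hg_cs 0, neg_eq_zero]
      simp [AuxL.pd_proj, hp]
    rw [Finset.sum_eq_zero (fun i _ => Finset.sum_eq_zero fun j _ => hterm i j),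
      hgterm, add_zero]
  -- part 3
  have hq : ContDiff ℝ (⊤ : ℕ∞) (fun y : Fin n → ℝ => ∑ i, (y i) ^ 2) :=
    ContDiff.sum fun i _ =>
      ((ContinuousLinearMap.proj (R := ℝ) (φ := fun _ : Fin n => ℝ) i).contDiff).pow 2
  have part3 : (∫ x in Ω, (∑ i, (x i) ^ 2) * Lop A x) = 0 := by
    rw [hred _, hsplit _ hq]
    have hterm : ∀ i j : Fin n,
        (∫ x, (∑ k, (x k) ^ 2) * pd i (fun y => pd j (fun z => A z i j) y) x)
          = ∫ x, (2 * (if i = j then 1 else 0)) * A x i j := by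
      intro i j
      rw [AuxL.ibp hq (hpdpd_sm i j) (hpdpd_cs i j) i]
      simp only [AuxL.pd_sq]
      have h2 : ContDiff ℝ (⊤ : ℕ∞) (fun y : Fin n → ℝ => 2 * y i) :=
        contDiff_const.mul (ContinuousLinearMap.proj (R := ℝ) (φ := fun _ : Fin n => ℝ) i).contDiff
      rw [AuxL.ibp h2 (hA i j) (hAcs i j) j, neg_neg]
      congr 1
      funext x
      have hproj_i : ContDiff ℝ (⊤ : ℕ∞) (fun y : Fin n → ℝ => y i) :=
        (ContinuousLinearMap.proj (R := ℝ) (φ := fun _ : Fin n => ℝ) i).contDiff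
      have hpc : pd j (fun y : Fin n → ℝ => 2 * y i) x
          = 2 * pd j (fun y : Fin n → ℝ => y i) x := AuxL.pd_const_mul hproj_i 2 j x
      rw [hpc, AuxL.pd_proj]
    have hcollapse : ∀ i : Fin n,
        (∑ j, ∫ x, (2 * (if i = j then 1 else 0)) * A x i j) = ∫ x, 2 * A x i i := by
      intro i
      rw [Finset.sum_eq_single i]
      · simp
      · intro j _ hji
        have hz : ∀ x : Fin n → ℝ, (2 * (if i = j then 1 else 0)) * A x i j = 0 := by
          intro x
          rw [if_neg (Ne.symm hji)]
          ring
        simp only [hz, integral_zero]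
      · intro h
        exact absurd (Finset.mem_univ i) h
    have hgterm :
        (∫ x, (∑ k, (x k) ^ 2) * pd 0 (fun y : Fin n → ℝ => (y 0)⁻¹ * ∑ i, A y i i) x)
          = - ∑ i, ∫ x, 2 * A x i i := by
      rw [AuxL.ibp hq hg hg_cs 0]
      simp only [AuxL.pd_sq]
      have hpt : ∀ x : Fin n → ℝ,
          (2 * x 0) * ((x 0)⁻¹ * ∑ i, A x i i) = ∑ i, 2 * A x i i := by
        intro x
        rw [← Finset.mul_sum]
        by_cases h : (∑ i, A x i i) = 0
        · simp [h]
        · have h0 : x 0 ≠ 0 := by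
            have hx : x ∈ tsupport (fun y : Fin n → ℝ => ∑ i, A y i i) :=
              subset_closure h
            exact (htr_pos x hx).ne'
          field_simp
      simp_rw [hpt]
      rw [integral_finset_sum _ (fun i _ => (show Integrable (fun x => 2 * A x i i) from
        (continuous_const.mul (hA i i).continuous).integrable_of_hasCompactSupport
          (hAcs i i).mul_left))]
    rw [Finset.sum_congr rfl fun i _ => (Finset.sum_congr rfl fun j _ => hterm i j).trans
      (hcollapse i), hgterm]
    ring
  exact ⟨part1, part2, part3⟩
end
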